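/- arXiv:2209.15606 — 5 statements merged into one kernel-verified Lean document; each statement's English description precedes it below -/
import Mathlib

section
/- For an adjunction L ⊣ R between abelian categories with counit ε, the following are equivalent: (1) the adjunction is precomonadic; (2) ε_X is an epimorphism for every object X; (3) R is faithful. -/
open CategoryTheory Category Limits

universe v₁ v₂ u₁ u₂

variable {A : Type u₁} [Category.{v₁} A] {B : Type u₂} [Category.{v₂} B]

/-- An adjunction `L ⊣ R` is *precomonadic* if for every object `X` the diagram
`LRLR(X) ⇉ LR(X) → X`, with parallel maps `LR(ε_X)` and `ε_{LR(X)}` and with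
`ε_X` as the projection, is a coequalizer. -/
def Precomonadic {L : A ⥤ B} {R : B ⥤ A} (adj : L ⊣ R) : Prop :=
  ∀ X : B, Nonempty (IsColimit (Cofork.ofπ
    (f := L.map (R.map (adj.counit.app X)))
    (g := adj.counit.app (L.obj (R.obj X)))
    (adj.counit.app X)
    (by simpa using adj.counit.naturality (adj.counit.app X))))

theorem precomonadic_tfae_general [Abelian B] {L : A ⥤ B} {R : B ⥤ A}
    (adj : L ⊣ R) :
    List.TFAE [Precomonadic adj, ∀ X : B, Epi (adj.counit.app X), R.Faithful] := by
  tfae_have 1 → 2 := fun h X => epi_of_isColimit_cofork (h X).some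
  tfae_have 2 → 3 := fun _ => adj.faithful_R_of_epi_counit_app
  tfae_have 3 → 2 := fun _ X => adj.counit_epi_of_R_faithful X
  -- Every epimorphism of `B` is regular, and a componentwise regular epi counit is componentwise
  -- the coequalizer of `LR(ε_X)` and `ε_{LR(X)}`.
  tfae_have 2 → 1 := fun _ X => ⟨LiftLeftAdjoint.counitCoequalises adj
    (fun Y => (IsRegularEpiCategory.regularEpiOfEpi (adj.counit.app Y)).getStruct) X⟩
  tfae_finish

/-- For an adjunction `L ⊣ R` between abelian categories, the following are equivalent:
(1) the adjunction is precomonadic; (2) `ε_X` is an epimorphism for every `X`;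
(3) `R` is faithful. -/
theorem precomonadic_tfae [Abelian A] [Abelian B] {L : A ⥤ B} {R : B ⥤ A}
    (adj : L ⊣ R) :
    List.TFAE [Precomonadic adj, ∀ X : B, Epi (adj.counit.app X), R.Faithful] :=
  precomonadic_tfae_general adj
end

section
/- In an abelian category, an adjunction L ⊣ R is precomonadic if and only if its right adjoint R is faithful. -/
/-!
If every counit component is epi, any pair coequalized by `ε_X` is also coequalized by every
morphism out of `LR(X)` that coequalizes `LR(ε_X)` and `ε_{LR(X)}`: precompose with the epi
`ε_W` and use naturality of `ε`. Hence whenever `ε_X` is a regular epimorphism it is already the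
coequalizer of the canonical pair. In an abelian category every epimorphism is regular, and the
counit is componentwise epi exactly when `R` is faithful.
-/

open CategoryTheory Category Limits

universe v₁ v₂ u₁ u₂

variable {A : Type u₁} [Category.{v₁} A] {B : Type u₂} [Category.{v₂} B]

namespace CategoryTheory.Adjunction

variable {L : A ⥤ B} {R : B ⥤ A} (adj : L ⊣ R)

abbrev counitCofork (X : B) :
    Cofork (L.map (R.map (adj.counit.app X))) (adj.counit.app (L.obj (R.obj X))) :=
  Cofork.ofπ (adj.counit.app X) (by simp)

theorem faithful_of_precomonadic (h : Precomonadic adj) : R.Faithful :=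
  have (X : B) : Epi (adj.counit.app X) := epi_of_isColimit_cofork (h X).some
  adj.faithful_R_of_epi_counit_app

theorem comp_eq_comp_of_counitCofork_condition {X W Z : B} [Epi (adj.counit.app W)]
    {f g : W ⟶ L.obj (R.obj X)} (hfg : f ≫ adj.counit.app X = g ≫ adj.counit.app X)
    {m : L.obj (R.obj X) ⟶ Z}
    (hm : L.map (R.map (adj.counit.app X)) ≫ m = adj.counit.app (L.obj (R.obj X)) ≫ m) :
    f ≫ m = g ≫ m := by
  have key (k : W ⟶ L.obj (R.obj X)) :
      adj.counit.app W ≫ k ≫ m = L.map (R.map (k ≫ adj.counit.app X)) ≫ m := by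
    rw [← reassoc_of% (adj.counit.naturality k), ← hm]
    simp
  rw [← cancel_epi (adj.counit.app W), key, key, hfg]

noncomputable def isColimitCounitCoforkOfRegularEpi [∀ Y, Epi (adj.counit.app Y)] {X : B}
    (hX : RegularEpi (adj.counit.app X)) : IsColimit (adj.counitCofork X) :=
  Cofork.IsColimit.mk _
    (fun s => Cofork.IsColimit.desc hX.isColimit s.π
      (adj.comp_eq_comp_of_counitCofork_condition hX.w s.condition))
    (fun _ => Cofork.IsColimit.π_desc' hX.isColimit _ _)
    (fun _ _ hm => Cofork.IsColimit.hom_ext hX.isColimit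
      (hm.trans (Cofork.IsColimit.π_desc' hX.isColimit _ _).symm))

theorem precomonadic_iff_faithful_of_isRegularEpiCategory [IsRegularEpiCategory B] :
    Precomonadic adj ↔ R.Faithful :=
  ⟨adj.faithful_of_precomonadic,
    fun _ _ => ⟨adj.isColimitCounitCoforkOfRegularEpi (regularEpiOfEpi _)⟩⟩

end CategoryTheory.Adjunction

theorem precomonadic_iff_faithful_general [Abelian B] {L : A ⥤ B} {R : B ⥤ A}
    (adj : L ⊣ R) :
    Precomonadic adj ↔ R.Faithful :=
  adj.precomonadic_iff_faithful_of_isRegularEpiCategory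

/-- In an abelian category, an adjunction `L ⊣ R` is precomonadic if and only if
its right adjoint `R` is faithful. -/
theorem precomonadic_iff_faithful [Abelian A] [Abelian B] {L : A ⥤ B} {R : B ⥤ A}
    (adj : L ⊣ R) :
    Precomonadic adj ↔ R.Faithful :=
  precomonadic_iff_faithful_general adj
end

section
/- Any monoidal adjunction between rigid monoidal categories is a coHopf adjunction, i.e., the coHopf operators h^l_{X,Y} : R(X) ⊗ Y → R(X ⊗ L(Y)) and h^r_{X,Y} : X ⊗ R(Y) → R(L(X) ⊗ Y) are invertible. -/
/-!
The strong monoidal functor `L` carries a duality `ᘁY ⊣ Y` of `C` to a duality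
`L(ᘁY) ⊣ L(Y)` of `D`. The coHopf operators are natural, trivial at the unit object and,
because the unit of the adjunction is monoidal, multiplicative: `h^l_{X,Y} ▷ Z` followed by
`h^l_{X ⊗ LY, Z}` is `h^l_{X, Y ⊗ Z}` up to `δ L` and associators. Together these say that
`h^l` intertwines the string-pulling bijections `(B ⊗ ᘁY ⟶ A) ≃ (B ⟶ A ⊗ Y)` of `C` and `D`;
hence the mate of `h^l_{X ⊗ LY, ᘁY}` followed by `R` of the evaluation of `L(ᘁY) ⊣ L(Y)` is a
two-sided inverse of `h^l_{X,Y}`. The right operator is treated symmetrically with right duals.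
-/

open CategoryTheory Category MonoidalCategory Functor
open CategoryTheory.Functor.LaxMonoidal

universe v₁ v₂ u₁ u₂

namespace CategoryTheory
open Functor.OplaxMonoidal
variable {C : Type u₁} [Category.{v₁} C] [MonoidalCategory C]
variable {D : Type u₂} [Category.{v₂} D] [MonoidalCategory D]

theorem isIso_of_tensorRightHomEquiv {A B Y Z : C} [ExactPairing Z Y] (h : A ⊗ Y ⟶ B)
    (f : B ⊗ Z ⟶ A) (hf : h ▷ Z ≫ f = (tensorRightHomEquiv _ Z Y A).symm (𝟙 _))
    (fh : tensorRightHomEquiv B Z Y A f ≫ h = 𝟙 B) : IsIso h :=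
  ⟨tensorRightHomEquiv B Z Y A f, (tensorRightHomEquiv _ Z Y A).symm.injective <| by
    rw [tensorRightHomEquiv_symm_naturality, Equiv.symm_apply_apply, hf], fh⟩

theorem isIso_of_tensorLeftHomEquiv {A B X Z : C} [ExactPairing X Z] (h : X ⊗ A ⟶ B)
    (f : Z ⊗ B ⟶ A) (hf : Z ◁ h ≫ f = (tensorLeftHomEquiv _ X Z A).symm (𝟙 _))
    (fh : tensorLeftHomEquiv B X Z A f ≫ h = 𝟙 B) : IsIso h :=
  ⟨tensorLeftHomEquiv B X Z A f, (tensorLeftHomEquiv _ X Z A).symm.injective <| by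
    rw [tensorLeftHomEquiv_symm_naturality, Equiv.symm_apply_apply, hf], fh⟩

abbrev Functor.Monoidal.mapExactPairing (F : C ⥤ D) [F.Monoidal] (X Y : C) [ExactPairing X Y] :
    ExactPairing (F.obj X) (F.obj Y) where
  coevaluation' := ε F ≫ F.map (η_ X Y) ≫ δ F X Y
  evaluation' := μ F Y X ≫ F.map (ε_ X Y) ≫ η F
  coevaluation_evaluation' := by
    simp only [MonoidalCategory.whiskerLeft_comp, comp_whiskerRight, assoc,
      LaxMonoidal.right_unitality, OplaxMonoidal.left_unitality]
    rw [← F.map_comp_assoc, ← ExactPairing.coevaluation_evaluation X Y]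
    simp only [F.map_comp, Monoidal.map_whiskerLeft, Monoidal.map_whiskerRight,
      Monoidal.map_associator_inv, assoc, Monoidal.μ_δ_assoc]
  evaluation_coevaluation' := by
    simp only [comp_whiskerRight, MonoidalCategory.whiskerLeft_comp, assoc,
      LaxMonoidal.left_unitality, OplaxMonoidal.right_unitality]
    rw [← F.map_comp_assoc, ← ExactPairing.evaluation_coevaluation X Y]
    simp only [F.map_comp, Monoidal.map_whiskerLeft, Monoidal.map_whiskerRight,
      Monoidal.map_associator, assoc, Monoidal.μ_δ_assoc]

attribute [local instance] Functor.Monoidal.mapExactPairing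

lemma Functor.Monoidal.mapExactPairing_coevaluation (F : C ⥤ D) [F.Monoidal] (X Y : C)
    [ExactPairing X Y] : η_ (F.obj X) (F.obj Y) = ε F ≫ F.map (η_ X Y) ≫ δ F X Y := rfl

lemma Functor.Monoidal.mapExactPairing_evaluation (F : C ⥤ D) [F.Monoidal] (X Y : C)
    [ExactPairing X Y] : ε_ (F.obj X) (F.obj Y) = μ F Y X ≫ F.map (ε_ X Y) ≫ η F := rfl

namespace Adjunction
variable {L : C ⥤ D} {R : D ⥤ C} (adj : L ⊣ R)

section
variable [R.LaxMonoidal]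

def leftCoHopf (X : D) (Y : C) : R.obj X ⊗ Y ⟶ R.obj (X ⊗ L.obj Y) :=
  R.obj X ◁ adj.unit.app Y ≫ μ R X (L.obj Y)

def rightCoHopf (X : C) (Y : D) : X ⊗ R.obj Y ⟶ R.obj (L.obj X ⊗ Y) :=
  adj.unit.app X ▷ R.obj Y ≫ μ R (L.obj X) Y

lemma leftCoHopf_natural_left {X X' : D} (g : X ⟶ X') (Y : C) :
    R.map g ▷ Y ≫ adj.leftCoHopf X' Y = adj.leftCoHopf X Y ≫ R.map (g ▷ L.obj Y) := by
  simp only [leftCoHopf, ← whisker_exchange_assoc, Functor.comp_obj, μ_natural_left, assoc]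

lemma leftCoHopf_natural_right (X : D) {Y Y' : C} (f : Y ⟶ Y') :
    R.obj X ◁ f ≫ adj.leftCoHopf X Y' = adj.leftCoHopf X Y ≫ R.map (X ◁ L.map f) := by
  rw [leftCoHopf, leftCoHopf, ← MonoidalCategory.whiskerLeft_comp_assoc, ← unit_naturality,
    MonoidalCategory.whiskerLeft_comp_assoc, μ_natural_right, assoc]

lemma rightCoHopf_natural_right (X : C) {Y Y' : D} (g : Y ⟶ Y') :
    X ◁ R.map g ≫ adj.rightCoHopf X Y' = adj.rightCoHopf X Y ≫ R.map (L.obj X ◁ g) := by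
  simp only [rightCoHopf, whisker_exchange_assoc, Functor.comp_obj, μ_natural_right, assoc]

lemma rightCoHopf_natural_left {X X' : C} (f : X ⟶ X') (Y : D) :
    f ▷ R.obj Y ≫ adj.rightCoHopf X' Y = adj.rightCoHopf X Y ≫ R.map (L.map f ▷ Y) := by
  rw [rightCoHopf, rightCoHopf, ← comp_whiskerRight_assoc, ← unit_naturality,
    comp_whiskerRight_assoc, μ_natural_left, assoc]

end

section
variable [L.OplaxMonoidal] [R.LaxMonoidal] [adj.IsMonoidal]

lemma leftCoHopf_tensor (X : D) (Y Z : C) :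
    adj.leftCoHopf X Y ▷ Z ≫ adj.leftCoHopf (X ⊗ L.obj Y) Z =
      (α_ _ _ _).hom ≫ adj.leftCoHopf X (Y ⊗ Z) ≫
        R.map (X ◁ δ L Y Z ≫ (α_ _ _ _).inv) := by
  rw [← Iso.inv_comp_eq]
  calc _ = ((α_ _ _ _).inv ≫ (R.obj X ◁ adj.unit.app Y) ▷ Z ≫ _ ◁ adj.unit.app Z) ≫
        μ R X (L.obj Y) ▷ _ ≫ μ R _ (L.obj Z) := by
        simp only [leftCoHopf, comp_whiskerRight, assoc, whisker_exchange_assoc, Functor.id_obj,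
          Functor.comp_obj]
    _ = R.obj X ◁ ((adj.unit.app Y ⊗ₘ adj.unit.app Z) ≫ μ R _ _) ≫ μ R X _ ≫
        R.map (α_ _ _ _).inv := by
        rw [MonoidalCategory.whiskerLeft_comp_assoc, LaxMonoidal.associativity_inv]
        simp [MonoidalCategory.tensorHom_def]
    _ = _ := by
        rw [← unit_app_tensor_comp_map_δ, leftCoHopf, MonoidalCategory.whiskerLeft_comp_assoc,
          μ_natural_right_assoc, R.map_comp, assoc]

lemma rightCoHopf_tensor (X Y : C) (Z : D) :
    X ◁ adj.rightCoHopf Y Z ≫ adj.rightCoHopf X (L.obj Y ⊗ Z) =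
      (α_ _ _ _).inv ≫ adj.rightCoHopf (X ⊗ Y) Z ≫
        R.map (δ L X Y ▷ Z ≫ (α_ _ _ _).hom) := by
  rw [Iso.eq_inv_comp]
  calc _ = ((α_ _ _ _).hom ≫ X ◁ (adj.unit.app Y ▷ R.obj Z) ≫ adj.unit.app X ▷ _) ≫
        _ ◁ μ R (L.obj Y) Z ≫ μ R (L.obj X) _ := by
        simp only [rightCoHopf, MonoidalCategory.whiskerLeft_comp, assoc, whisker_exchange_assoc,
          Functor.id_obj, Functor.comp_obj]
    _ = ((adj.unit.app X ⊗ₘ adj.unit.app Y) ≫ μ R _ _) ▷ R.obj Z ≫ μ R _ Z ≫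
        R.map (α_ _ _ _).hom := by
        rw [comp_whiskerRight_assoc, LaxMonoidal.associativity]
        simp [MonoidalCategory.tensorHom_def']
    _ = _ := by
        rw [← unit_app_tensor_comp_map_δ, rightCoHopf, comp_whiskerRight_assoc,
          μ_natural_left_assoc, R.map_comp, assoc]

end

section
variable [L.Monoidal] [R.LaxMonoidal] [adj.IsMonoidal]

lemma unit_app_unit : adj.unit.app (𝟙_ C) = ε R ≫ R.map (ε L) := by
  simp [← adj.unit_app_unit_comp_map_η]

lemma leftCoHopf_unit (X : D) :
    adj.leftCoHopf X (𝟙_ C) = (ρ_ _).hom ≫ R.map ((ρ_ X).inv ≫ X ◁ ε L) := by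
  simp [leftCoHopf, unit_app_unit]

lemma rightCoHopf_unit (Y : D) :
    adj.rightCoHopf (𝟙_ C) Y = (λ_ _).hom ≫ R.map ((λ_ Y).inv ≫ ε L ▷ Y) := by
  simp [rightCoHopf, unit_app_unit]

lemma leftCoHopf_whiskerRight_comp_evaluation {Y Z : C} [ExactPairing Z Y] (X : D) :
    adj.leftCoHopf X Y ▷ Z ≫ adj.leftCoHopf (X ⊗ L.obj Y) Z ≫
        R.map ((tensorRightHomEquiv _ (L.obj Z) (L.obj Y) X).symm (𝟙 _)) =
      (tensorRightHomEquiv _ Z Y (R.obj X)).symm (𝟙 _) := by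
  calc _ = (α_ _ _ _).hom ≫ adj.leftCoHopf X (Y ⊗ Z) ≫
        R.map (X ◁ L.map (ε_ Z Y) ≫ X ◁ η L ≫ (ρ_ X).hom) := by
        rw [reassoc_of% leftCoHopf_tensor, ← R.map_comp]
        congr 3
        simp [tensorRightHomEquiv, Functor.Monoidal.mapExactPairing_evaluation]
    _ = _ := by
      rw [R.map_comp, ← reassoc_of% leftCoHopf_natural_right, leftCoHopf_unit, assoc,
        ← R.map_comp]
      simp [tensorRightHomEquiv]

lemma tensorRightHomEquiv_leftCoHopf_comp {Y Z : C} [ExactPairing Z Y] {V X : D}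
    (u : V ⊗ L.obj Z ⟶ X) :
    tensorRightHomEquiv _ Z Y _ (adj.leftCoHopf V Z ≫ R.map u) ≫ adj.leftCoHopf X Y =
      R.map (tensorRightHomEquiv _ (L.obj Z) (L.obj Y) _ u) := by
  simp [tensorRightHomEquiv, leftCoHopf_natural_left, reassoc_of% leftCoHopf_tensor,
    reassoc_of% leftCoHopf_natural_right, leftCoHopf_unit,
    Functor.Monoidal.mapExactPairing_coevaluation]

lemma rightCoHopf_whiskerLeft_comp_evaluation {X Z : C} [ExactPairing X Z] (Y : D) :
    Z ◁ adj.rightCoHopf X Y ≫ adj.rightCoHopf Z (L.obj X ⊗ Y) ≫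
        R.map ((tensorLeftHomEquiv _ (L.obj X) (L.obj Z) Y).symm (𝟙 _)) =
      (tensorLeftHomEquiv _ X Z (R.obj Y)).symm (𝟙 _) := by
  calc _ = (α_ _ _ _).inv ≫ adj.rightCoHopf (Z ⊗ X) Y ≫
        R.map (L.map (ε_ X Z) ▷ Y ≫ η L ▷ Y ≫ (λ_ Y).hom) := by
        rw [reassoc_of% rightCoHopf_tensor, ← R.map_comp]
        congr 3
        simp [tensorLeftHomEquiv, Functor.Monoidal.mapExactPairing_evaluation]
    _ = _ := by
      rw [R.map_comp, ← reassoc_of% rightCoHopf_natural_left, rightCoHopf_unit, assoc,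
        ← R.map_comp]
      simp [tensorLeftHomEquiv]

lemma tensorLeftHomEquiv_rightCoHopf_comp {X Z : C} [ExactPairing X Z] {V Y : D}
    (u : L.obj Z ⊗ V ⟶ Y) :
    tensorLeftHomEquiv _ X Z _ (adj.rightCoHopf Z V ≫ R.map u) ≫ adj.rightCoHopf X Y =
      R.map (tensorLeftHomEquiv _ (L.obj X) (L.obj Z) _ u) := by
  simp [tensorLeftHomEquiv, rightCoHopf_natural_right, reassoc_of% rightCoHopf_tensor,
    reassoc_of% rightCoHopf_natural_left, rightCoHopf_unit,
    Functor.Monoidal.mapExactPairing_coevaluation]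

theorem isIso_leftCoHopf (X : D) (Y : C) [HasLeftDual Y] : IsIso (adj.leftCoHopf X Y) :=
  isIso_of_tensorRightHomEquiv _
    (adj.leftCoHopf (X ⊗ L.obj Y) (ᘁY) ≫ R.map ((tensorRightHomEquiv _ _ _ _).symm (𝟙 _)))
    (adj.leftCoHopf_whiskerRight_comp_evaluation X)
    (by rw [tensorRightHomEquiv_leftCoHopf_comp, Equiv.apply_symm_apply, R.map_id])

theorem isIso_rightCoHopf (X : C) (Y : D) [HasRightDual X] : IsIso (adj.rightCoHopf X Y) :=
  isIso_of_tensorLeftHomEquiv _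
    (adj.rightCoHopf (Xᘁ) (L.obj X ⊗ Y) ≫ R.map ((tensorLeftHomEquiv _ _ _ _).symm (𝟙 _)))
    (adj.rightCoHopf_whiskerLeft_comp_evaluation Y)
    (by rw [tensorLeftHomEquiv_rightCoHopf_comp, Equiv.apply_symm_apply, R.map_id])

end
end Adjunction
end CategoryTheory

theorem monoidal_adjunction_between_rigid_is_coHopf_general
    {C : Type u₁} [Category.{v₁} C] [MonoidalCategory C] [RigidCategory C]
    {D : Type u₂} [Category.{v₂} D] [MonoidalCategory D]
    (L : C ⥤ D) (R : D ⥤ C) (adj : L ⊣ R)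
    [L.Monoidal] [R.LaxMonoidal] [adj.IsMonoidal] :
    (∀ (X : D) (Y : C),
      IsIso ((R.obj X ◁ adj.unit.app Y) ≫ μ R X (L.obj Y))) ∧
    (∀ (X : C) (Y : D),
      IsIso ((adj.unit.app X ▷ R.obj Y) ≫ μ R (L.obj X) Y)) :=
  ⟨fun X Y => adj.isIso_leftCoHopf X Y, fun X Y => adj.isIso_rightCoHopf X Y⟩

/-- Any monoidal adjunction `L ⊣ R` between rigid monoidal categories is a coHopf
adjunction: the coHopf operators
`h^l_{X,Y} = R₂(X, L(Y)) ∘ (id_{R(X)} ⊗ η_Y) : R(X) ⊗ Y ⟶ R(X ⊗ L(Y))` and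
`h^r_{X,Y} = R₂(L(X), Y) ∘ (η_X ⊗ id_{R(Y)}) : X ⊗ R(Y) ⟶ R(L(X) ⊗ Y)`
are invertible. -/
theorem monoidal_adjunction_between_rigid_is_coHopf
    {C : Type u₁} [Category.{v₁} C] [MonoidalCategory C] [RigidCategory C]
    {D : Type u₂} [Category.{v₂} D] [MonoidalCategory D] [RigidCategory D]
    (L : C ⥤ D) (R : D ⥤ C) (adj : L ⊣ R)
    [L.Monoidal] [R.LaxMonoidal] [adj.IsMonoidal] :
    (∀ (X : D) (Y : C),
      IsIso ((R.obj X ◁ adj.unit.app Y) ≫ μ R X (L.obj Y))) ∧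
    (∀ (X : C) (Y : D),
      IsIso ((adj.unit.app X ▷ R.obj Y) ≫ μ R (L.obj X) Y)) :=
  monoidal_adjunction_between_rigid_is_coHopf_general L R adj
end

section
/- Given a Frobenius monoidal functor F between monoidal categories and a Frobenius algebra (A, m, u, Δ, ν), the object F(A) with multiplication F(m) ∘ F₂(A,A), unit F(u) ∘ F₀, comultiplication F²(A,A) ∘ F(Δ), and counit F⁰ ∘ F(ν) is a Frobenius algebra. -/
/-! A lax monoidal functor carries monoids to monoids and an oplax one comonoids to comonoids
(`Functor.monObjObj`, `Functor.obj.instComonObj`), so only the two Frobenius laws are new.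
For these, the Frobenius condition on `F` rewrites `(F X ◁ δ) ≫ α⁻¹ ≫ (μ ▷ F Z)` as
`μ ≫ F α⁻¹ ≫ δ`; naturality of `μ` and `δ` then moves the whole law inside `F`, where it
holds in `A`. -/

open CategoryTheory Category MonoidalCategory Functor
open CategoryTheory.Functor.LaxMonoidal CategoryTheory.Functor.OplaxMonoidal

universe v₁ v₂ u₁ u₂

variable (C : Type u₁) [Category.{v₁} C] [MonoidalCategory C]

/-- A Frobenius algebra structure on an object `A` of a monoidal category:
an algebra and a coalgebra structure on `A` satisfying the Frobenius law
`(m ⊗ id)(id ⊗ Δ) = Δ ∘ m = (id ⊗ m)(Δ ⊗ id)`. -/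
structure FrobeniusAlgebraOn (A : C) where
  mul : A ⊗ A ⟶ A
  one : 𝟙_ C ⟶ A
  comul : A ⟶ A ⊗ A
  counit : A ⟶ 𝟙_ C
  mul_assoc : (mul ▷ A) ≫ mul = (α_ A A A).hom ≫ (A ◁ mul) ≫ mul
  one_mul : (one ▷ A) ≫ mul = (λ_ A).hom
  mul_one : (A ◁ one) ≫ mul = (ρ_ A).hom
  comul_assoc : comul ≫ (A ◁ comul) = comul ≫ (comul ▷ A) ≫ (α_ A A A).hom
  comul_counit_left : comul ≫ (counit ▷ A) = (λ_ A).inv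
  comul_counit_right : comul ≫ (A ◁ counit) = (ρ_ A).inv
  frobenius_left : (A ◁ comul) ≫ (α_ A A A).inv ≫ (mul ▷ A) = mul ≫ comul
  frobenius_right : (comul ▷ A) ≫ (α_ A A A).hom ≫ (A ◁ mul) = mul ≫ comul

variable {C}
variable {D : Type u₂} [Category.{v₂} D] [MonoidalCategory D]

/-- The compatibility laws making a functor which is both lax and oplax monoidal
into a Frobenius monoidal functor. -/
def FrobeniusConditions (F : C ⥤ D) [F.LaxMonoidal] [F.OplaxMonoidal] : Prop :=
  (∀ X Y Z : C,
    (δ F X Y ▷ F.obj Z) ≫ (α_ (F.obj X) (F.obj Y) (F.obj Z)).hom ≫ (F.obj X ◁ μ F Y Z) =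
      μ F (X ⊗ Y) Z ≫ F.map (α_ X Y Z).hom ≫ δ F X (Y ⊗ Z)) ∧
  (∀ X Y Z : C,
    (F.obj X ◁ δ F Y Z) ≫ (α_ (F.obj X) (F.obj Y) (F.obj Z)).inv ≫ (μ F X Y ▷ F.obj Z) =
      μ F X (Y ⊗ Z) ≫ F.map (α_ X Y Z).inv ≫ δ F (X ⊗ Y) Z)

namespace FrobeniusAlgebraOn

variable {A : C} (S : FrobeniusAlgebraOn C A)

abbrev monObj : MonObj A where
  one := S.one
  mul := S.mul
  one_mul := S.one_mul
  mul_one := S.mul_one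
  mul_assoc := S.mul_assoc

abbrev comonObj : ComonObj A where
  counit := S.counit
  comul := S.comul
  counit_comul := S.comul_counit_left
  comul_counit := S.comul_counit_right
  comul_assoc := S.comul_assoc

def ofMonObjComonObj (M : MonObj A) (K : ComonObj A)
    (frobenius_left : (A ◁ K.comul) ≫ (α_ A A A).inv ≫ (M.mul ▷ A) = M.mul ≫ K.comul)
    (frobenius_right : (K.comul ▷ A) ≫ (α_ A A A).hom ≫ (A ◁ M.mul) = M.mul ≫ K.comul) :
    FrobeniusAlgebraOn C A where
  mul := M.mul
  one := M.one
  comul := K.comul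
  counit := K.counit
  mul_assoc := M.mul_assoc
  one_mul := M.one_mul
  mul_one := M.mul_one
  comul_assoc := K.comul_assoc
  comul_counit_left := K.counit_comul
  comul_counit_right := K.comul_counit
  frobenius_left := frobenius_left
  frobenius_right := frobenius_right

end FrobeniusAlgebraOn

namespace FrobeniusConditions

variable {F : C ⥤ D} [F.LaxMonoidal] [F.OplaxMonoidal]

theorem map_frobenius_left (hF : FrobeniusConditions F) {X Y Y' Z W : C}
    (d : Y ⟶ Y' ⊗ Z) (m : X ⊗ Y' ⟶ W) :
    (F.obj X ◁ (F.map d ≫ δ F Y' Z)) ≫ (α_ (F.obj X) (F.obj Y') (F.obj Z)).inv ≫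
        ((μ F X Y' ≫ F.map m) ▷ F.obj Z) =
      μ F X Y ≫ F.map ((X ◁ d) ≫ (α_ X Y' Z).inv ≫ (m ▷ Z)) ≫ δ F W Z := by
  simp only [MonoidalCategory.whiskerLeft_comp, comp_whiskerRight, assoc]
  rw [reassoc_of% hF.2 X Y' Z, μ_natural_right_assoc, δ_natural_left]
  simp only [F.map_comp, assoc]

theorem map_frobenius_right (hF : FrobeniusConditions F) {X Y X' Z W : C}
    (d : X ⟶ Y ⊗ X') (m : X' ⊗ Z ⟶ W) :
    ((F.map d ≫ δ F Y X') ▷ F.obj Z) ≫ (α_ (F.obj Y) (F.obj X') (F.obj Z)).hom ≫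
        (F.obj Y ◁ (μ F X' Z ≫ F.map m)) =
      μ F X Z ≫ F.map ((d ▷ Z) ≫ (α_ Y X' Z).hom ≫ (Y ◁ m)) ≫ δ F Y W := by
  simp only [MonoidalCategory.whiskerLeft_comp, comp_whiskerRight, assoc]
  rw [reassoc_of% hF.1 Y X' Z, μ_natural_left_assoc, δ_natural_right]
  simp only [F.map_comp, assoc]

end FrobeniusConditions

/-- A Frobenius monoidal functor sends Frobenius algebras to Frobenius algebras:
`F(A)` is a Frobenius algebra with multiplication `F(m) ∘ F₂(A,A)`, unit
`F(u) ∘ F₀`, comultiplication `F²(A,A) ∘ F(Δ)` and counit `F⁰ ∘ F(ν)`. -/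
theorem frobenius_functor_preserves_frobenius_algebras
    (F : C ⥤ D) [F.LaxMonoidal] [F.OplaxMonoidal] (hF : FrobeniusConditions F)
    (A : C) (S : FrobeniusAlgebraOn C A) :
    ∃ T : FrobeniusAlgebraOn D (F.obj A),
      T.mul = μ F A A ≫ F.map S.mul ∧
      T.one = ε F ≫ F.map S.one ∧
      T.comul = F.map S.comul ≫ δ F A A ∧
      T.counit = F.map S.counit ≫ η F := by
  let := S.monObj
  let := S.comonObj
  refine ⟨.ofMonObjComonObj (F.monObjObj A) (Functor.obj.instComonObj A F) ?_ ?_,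
    rfl, rfl, rfl, rfl⟩
  · exact (hF.map_frobenius_left S.comul S.mul).trans <| by
      rw [S.frobenius_left, F.map_comp_assoc]; exact (assoc _ _ _).symm
  · exact (hF.map_frobenius_right S.comul S.mul).trans <| by
      rw [S.frobenius_right, F.map_comp_assoc]; exact (assoc _ _ _).symm
end

section
/- Let U ⊣ R be a monoidal adjunction between monoidal categories with unit η^r, counit ε^r, where R has lax structure R₂, and let h^l_{X,M} = R₂(X, U(M)) ∘ (id_{R(X)} ⊗ η^r_M) be the left coHopf operator. Then: (a) R₂(X, Y ⊗ UR(Z)) ∘ (id_{R(X)} ⊗ h^l_{Y,R(Z)}) = h^l_{X⊗Y, R(Z)} ∘ (R₂(X,Y) ⊗ id_{R(Z)}); (c) R(id_X ⊗ ε^r_Y) ∘ h^l_{X,R(Y)} = R₂(X,Y). -/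
open CategoryTheory Category MonoidalCategory Functor
open CategoryTheory.Functor.LaxMonoidal

universe v₁ v₂ u₁ u₂

variable {C : Type u₁} [Category.{v₁} C] [MonoidalCategory C]
variable {D : Type u₂} [Category.{v₂} D] [MonoidalCategory D]

/-- The left coHopf operator
`h^l_{X,M} = R₂(X, U(M)) ∘ (id_{R(X)} ⊗ η^r_M) : R(X) ⊗ M ⟶ R(X ⊗ U(M))`
of a monoidal adjunction `U ⊣ R`. -/
def coHopfL (U : C ⥤ D) (R : D ⥤ C) (adj : U ⊣ R) [R.LaxMonoidal]
    (X : D) (M : C) : R.obj X ⊗ M ⟶ R.obj (X ⊗ U.obj M) :=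
  (R.obj X ◁ adj.unit.app M) ≫ μ R X (U.obj M)

namespace coHopfL

variable (U : C ⥤ D) (R : D ⥤ C) (adj : U ⊣ R) [R.LaxMonoidal]

/- The unit enters only as `(R(X) ⊗ R(Y)) ◁ η_M`, which commutes with `R₂(X, Y) ▷ M`;
what remains is the associativity axiom of `R₂`. -/
theorem associativity (X Y : D) (M : C) :
    (α_ (R.obj X) (R.obj Y) M).hom ≫ (R.obj X ◁ coHopfL U R adj Y M) ≫
        μ R X (Y ⊗ U.obj M) =
      (μ R X Y ▷ M) ≫ coHopfL U R adj (X ⊗ Y) M ≫ R.map (α_ X Y (U.obj M)).hom := by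
  simp only [coHopfL, MonoidalCategory.whiskerLeft_comp, assoc]
  rw [← associator_naturality_right_assoc]
  dsimp only [Functor.comp_obj]
  rw [← LaxMonoidal.associativity, whisker_exchange_assoc]

theorem comp_map_whiskerLeft_counit (X Y : D) :
    coHopfL U R adj X (R.obj Y) ≫ R.map (X ◁ adj.counit.app Y) = μ R X Y := by
  rw [coHopfL, assoc, ← μ_natural_right, ← MonoidalCategory.whiskerLeft_comp_assoc,
    adj.right_triangle_components, MonoidalCategory.whiskerLeft_id, id_comp]
  rfl

end coHopfL

theorem coHopf_operator_identities_general
    (U : C ⥤ D) (R : D ⥤ C) (adj : U ⊣ R)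
    [R.LaxMonoidal] :
    (∀ X Y Z : D,
      (α_ (R.obj X) (R.obj Y) (R.obj Z)).hom ≫
          (R.obj X ◁ coHopfL U R adj Y (R.obj Z)) ≫ μ R X (Y ⊗ U.obj (R.obj Z)) =
        (μ R X Y ▷ R.obj Z) ≫ coHopfL U R adj (X ⊗ Y) (R.obj Z) ≫
          R.map (α_ X Y (U.obj (R.obj Z))).hom) ∧
    (∀ X Y : D,
      coHopfL U R adj X (R.obj Y) ≫ R.map (X ◁ adj.counit.app Y) = μ R X Y) :=
  ⟨fun X Y Z => coHopfL.associativity U R adj X Y (R.obj Z),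
    coHopfL.comp_map_whiskerLeft_counit U R adj⟩

/-- Identities (a) and (c) of the left coHopf operator of a monoidal adjunction:
(a) `R₂(X, Y ⊗ UR(Z)) ∘ (id_{R(X)} ⊗ h^l_{Y,R(Z)}) = h^l_{X⊗Y,R(Z)} ∘ (R₂(X,Y) ⊗ id_{R(Z)})`
(with the structural associators inserted), and
(c) `R(id_X ⊗ ε^r_Y) ∘ h^l_{X,R(Y)} = R₂(X,Y)`. -/
theorem coHopf_operator_identities
    (U : C ⥤ D) (R : D ⥤ C) (adj : U ⊣ R)
    [U.Monoidal] [R.LaxMonoidal] [adj.IsMonoidal] :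
    (∀ X Y Z : D,
      (α_ (R.obj X) (R.obj Y) (R.obj Z)).hom ≫
          (R.obj X ◁ coHopfL U R adj Y (R.obj Z)) ≫ μ R X (Y ⊗ U.obj (R.obj Z)) =
        (μ R X Y ▷ R.obj Z) ≫ coHopfL U R adj (X ⊗ Y) (R.obj Z) ≫
          R.map (α_ X Y (U.obj (R.obj Z))).hom) ∧
    (∀ X Y : D,
      coHopfL U R adj X (R.obj Y) ≫ R.map (X ◁ adj.counit.app Y) = μ R X Y) :=
  coHopf_operator_identities_general U R adj
end
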